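/- There exists a unique continuous linear operator T on the Hilbert space ℓ²(ℤ, ℂ) such that (Tf)(k) = f(k) − (f(k−1) + f(k+1))/2 for every f ∈ ℓ²(ℤ, ℂ) and every k ∈ ℤ, and the spectrum of T (as an operator on a complex Banach space) is exactly the image in ℂ of the real interval [0, 2], i.e., spectrum(T) = {z ∈ ℂ : z is real and 0 ≤ Re z ≤ 2}. -/

import Mathlib

/-!
Let `S` be the bilateral shift `(S f) k = f (k + 1)`, a unitary on `ℓ²(ℤ)`. The Laplacian is
`T = 1 - (S + S⋆)/2 = 1 - ℜ S`, so by the continuous functional calculus for the normal operator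
`S`, `σ(T) = {1 - Re w | w ∈ σ(S)}`. The spectrum of a unitary lies on the unit circle, and that
of `S` is all of it: for `|w| = 1` the modulation `(M f) k = w ^ k f k` satisfies
`S M = w • M S`, so `σ(S)` is a nonempty rotation-invariant subset of the circle.
-/

open scoped ENNReal ComplexStarModule Pointwise
open Metric Complex

section

variable {α β 𝕜 E : Type*} [NormedField 𝕜] [NormedAddCommGroup E] [NormedSpace 𝕜 E]
  {p : ℝ≥0∞}

theorem Memℓp.comp_equiv {f : β → E} (hf : Memℓp f p) (e : α ≃ β) : Memℓp (f ∘ e) p := by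
  obtain rfl | rfl | hp := p.trichotomy
  · rw [memℓp_zero_iff] at hf ⊢
    exact hf.preimage e.injective.injOn
  · rw [memℓp_infty_iff] at hf ⊢
    convert hf using 1
    exact e.surjective.range_comp fun b => ‖f b‖
  · rw [memℓp_gen_iff hp] at hf ⊢
    exact (e.summable_iff (f := fun b => ‖f b‖ ^ p.toReal)).2 hf

theorem Memℓp.smul_unimodular {E : α → Type*} [∀ a, NormedAddCommGroup (E a)]
    [∀ a, NormedSpace 𝕜 (E a)] {f : ∀ a, E a} (hf : Memℓp f p) {c : α → 𝕜}
    (hc : ∀ a, ‖c a‖ = 1) : Memℓp (fun a => c a • f a) p :=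
  hf.mono' fun a => by rw [norm_smul, hc, one_mul]

namespace lp

instance {E : α → Type*} [∀ a, NormedAddCommGroup (E a)] [Nonempty α] [∀ a, Nontrivial (E a)] :
    Nontrivial (lp E p) := by
  classical
  obtain ⟨a⟩ := ‹Nonempty α›
  obtain ⟨x, hx⟩ := exists_ne (0 : E a)
  exact nontrivial_of_ne (lp.single p a x) 0 fun h => hx (by simpa using congrArg (· a) h)

variable [Fact (1 ≤ p)]

theorem norm_comp_equiv (f : lp (fun _ : β => E) p) (e : α ≃ β) :
    ‖(⟨f ∘ e, (lp.memℓp f).comp_equiv e⟩ : lp (fun _ : α => E) p)‖ = ‖f‖ := by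
  obtain rfl | rfl | hp := p.trichotomy
  · exact absurd (Fact.out : (1 : ℝ≥0∞) ≤ 0) (by norm_num)
  · rw [lp.norm_eq_ciSup, lp.norm_eq_ciSup]
    exact e.iSup_comp (g := fun b => ‖f b‖)
  · rw [lp.norm_eq_tsum_rpow hp, lp.norm_eq_tsum_rpow hp]
    congr 1
    exact e.tsum_eq (fun b => ‖f b‖ ^ p.toReal)

variable (𝕜 E p) in
noncomputable def compEquiv (e : α ≃ β) : lp (fun _ : β => E) p ≃ₗᵢ[𝕜] lp (fun _ : α => E) p where
  toFun f := ⟨f ∘ e, (lp.memℓp f).comp_equiv e⟩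
  invFun f := ⟨f ∘ e.symm, (lp.memℓp f).comp_equiv e.symm⟩
  map_add' _ _ := rfl
  map_smul' _ _ := rfl
  left_inv f := by ext; simp
  right_inv f := by ext; simp
  norm_map' f := norm_comp_equiv f e

@[simp]
theorem compEquiv_apply (e : α ≃ β) (f : lp (fun _ : β => E) p) (a : α) :
    compEquiv 𝕜 E p e f a = f (e a) := rfl

@[simp]
theorem compEquiv_symm_apply (e : α ≃ β) (f : lp (fun _ : α => E) p) (b : β) :
    (compEquiv 𝕜 E p e).symm f b = f (e.symm b) := rfl

variable {E : α → Type*} [∀ a, NormedAddCommGroup (E a)] [∀ a, NormedSpace 𝕜 (E a)]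

noncomputable def smulUnimodular (c : α → 𝕜) (hc : ∀ a, ‖c a‖ = 1) : lp E p ≃ₗᵢ[𝕜] lp E p where
  toFun f := ⟨fun a => c a • f a, (lp.memℓp f).smul_unimodular hc⟩
  invFun f := ⟨fun a => (c a)⁻¹ • f a, (lp.memℓp f).smul_unimodular (by simp [hc])⟩
  map_add' f g := lp.ext <| funext fun a => smul_add (c a) (f a) (g a)
  map_smul' r f := by ext; simp [smul_comm (c _) r]
  left_inv f := by ext a; simp [inv_smul_smul₀ (norm_ne_zero_iff.1 ((hc a).trans_ne one_ne_zero))]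
  right_inv f := by
    ext a; simp [smul_inv_smul₀ (norm_ne_zero_iff.1 ((hc a).trans_ne one_ne_zero))]
  norm_map' f := by
    have hp : p ≠ 0 := (zero_lt_one.trans_le Fact.out).ne'
    refine le_antisymm (lp.norm_mono hp fun a => ?_) (lp.norm_mono hp fun a => ?_) <;>
      simp [norm_smul, hc]

@[simp]
theorem smulUnimodular_apply {c : α → 𝕜} (hc : ∀ a, ‖c a‖ = 1) (f : lp E p) (a : α) :
    smulUnimodular c hc f a = c a • f a := rfl

end lp

end

theorem spectrum_eq_sphere_of_unitary_of_rotation {A : Type*} [CStarAlgebra A] [Nontrivial A]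
    {u : A} (hu : u ∈ unitary A) (hrot : ∀ w ∈ sphere (0 : ℂ) 1, ∃ v : Aˣ, u * v = w • (v * u)) :
    spectrum ℂ u = sphere 0 1 := by
  have hσ_rot : ∀ w ∈ sphere (0 : ℂ) 1, w • spectrum ℂ u ⊆ spectrum ℂ u := by
    intro w hw
    obtain ⟨v, hv⟩ := hrot w hw
    have hconj : ↑v⁻¹ * u * ↑v = w • u := by
      rw [mul_assoc, hv, mul_smul_comm, ← mul_assoc, v.inv_mul, one_mul]
    rw [← spectrum.smul_eq_smul w u (spectrum.nonempty u), ← hconj, spectrum.units_conjugate']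
  refine (spectrum.subset_circle_of_unitary hu).antisymm fun w hw => ?_
  obtain ⟨z, hz⟩ := spectrum.nonempty u
  have hz1 : ‖z‖ = 1 := spectrum.norm_eq_one_of_unitary hu hz
  have hz0 : z ≠ 0 := norm_ne_zero_iff.1 (hz1.trans_ne one_ne_zero)
  refine hσ_rot (w / z) (by simp [hz1, mem_sphere_zero_iff_norm.1 hw]) ⟨z, hz, ?_⟩
  simp [div_mul_cancel₀ w hz0]

theorem Complex.re_image_sphere : re '' sphere (0 : ℂ) 1 = Set.Icc (-1) 1 := by
  refine subset_antisymm ?_ fun x hx => ?_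
  · rintro _ ⟨z, hz, rfl⟩
    exact abs_le.1 ((abs_re_le_norm z).trans (mem_sphere_zero_iff_norm.1 hz).le)
  · refine ⟨exp (Real.arccos x * I), by simp, ?_⟩
    rw [exp_ofReal_mul_I_re, Real.cos_arccos hx.1 hx.2]

theorem spectrum_one_sub_realPart_of_spectrum_eq_sphere {A : Type*} [CStarAlgebra A] (a : A)
    [IsStarNormal a] (hσ : spectrum ℂ a = sphere 0 1) :
    spectrum ℂ (1 - (ℜ a : A)) = {z : ℂ | z.im = 0 ∧ 0 ≤ z.re ∧ z.re ≤ 2} := by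
  have hre : (fun x : ℂ => 1 - (x.re : ℂ)) = ofReal ∘ (fun t => 1 - t) ∘ re := by
    ext; simp
  rw [← map_one (algebraMap ℂ A), ← spectrum.singleton_sub_eq, spectrum_realPart a, hσ,
    Set.singleton_sub, Set.image_image, hre, Set.image_comp, Set.image_comp, re_image_sphere,
    Set.image_const_sub_Icc]
  ext z
  constructor
  · rintro ⟨t, ⟨h0, h2⟩, rfl⟩
    norm_num at h0 h2 ⊢
    exact ⟨h0, h2⟩
  · rintro ⟨him, h0, h2⟩
    exact ⟨z.re, by norm_num [h0, h2], Complex.ext (by simp) (by simp [him])⟩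

local notation "ℓ²(ℤ)" => lp (fun _ : ℤ => ℂ) 2

noncomputable def bilateralShift : ℓ²(ℤ) ≃ₗᵢ[ℂ] ℓ²(ℤ) := lp.compEquiv ℂ ℂ 2 (Equiv.addRight 1)

noncomputable def modulation (w : ℂ) (hw : ‖w‖ = 1) : ℓ²(ℤ) ≃ₗᵢ[ℂ] ℓ²(ℤ) :=
  lp.smulUnimodular (fun k => w ^ k) fun k => by simp [hw]

noncomputable def shiftUnitary : unitary (ℓ²(ℤ) →L[ℂ] ℓ²(ℤ)) :=
  Unitary.linearIsometryEquiv.symm bilateralShift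

theorem bilateralShift_modulation (w : ℂ) (hw : ‖w‖ = 1) (f : ℓ²(ℤ)) :
    bilateralShift (modulation w hw f) = w • modulation w hw (bilateralShift f) := by
  have hw0 : w ≠ 0 := norm_ne_zero_iff.1 (hw.trans_ne one_ne_zero)
  ext k
  simp only [bilateralShift, modulation, lp.compEquiv_apply, lp.smulUnimodular_apply,
    lp.coeFn_smul, Pi.smul_apply, Equiv.coe_addRight, smul_eq_mul, zpow_add_one₀ hw0]
  ring

theorem spectrum_shiftUnitary : spectrum ℂ (shiftUnitary : ℓ²(ℤ) →L[ℂ] ℓ²(ℤ)) = sphere 0 1 := by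
  refine spectrum_eq_sphere_of_unitary_of_rotation shiftUnitary.2 fun w hw => ?_
  have hw1 : ‖w‖ = 1 := mem_sphere_zero_iff_norm.1 hw
  exact ⟨Unitary.toUnits (Unitary.linearIsometryEquiv.symm (modulation w hw1)),
    ContinuousLinearMap.ext (bilateralShift_modulation w hw1)⟩

noncomputable def lineLaplacian : ℓ²(ℤ) →L[ℂ] ℓ²(ℤ) := 1 - ℜ (shiftUnitary : ℓ²(ℤ) →L[ℂ] ℓ²(ℤ))

theorem lineLaplacian_apply (f : ℓ²(ℤ)) (k : ℤ) :
    lineLaplacian f k = f k - (f (k - 1) + f (k + 1)) / 2 := by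
  have hL : lineLaplacian f = f - (2⁻¹ : ℂ) • (bilateralShift f + bilateralShift.symm f) := by
    simp [lineLaplacian, realPart_apply_coe, shiftUnitary, LinearIsometryEquiv.star_eq_symm,
      ← Complex.coe_smul]
  rw [hL, lp.coeFn_sub, lp.coeFn_smul, lp.coeFn_add]
  simp only [Pi.sub_apply, Pi.smul_apply, Pi.add_apply, smul_eq_mul, bilateralShift,
    lp.compEquiv_apply, lp.compEquiv_symm_apply, Equiv.coe_addRight, Equiv.addRight_symm,
    ← sub_eq_add_neg]
  ring

theorem spectrum_lineLaplacian :
    spectrum ℂ lineLaplacian = {z : ℂ | z.im = 0 ∧ 0 ≤ z.re ∧ z.re ≤ 2} :=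
  spectrum_one_sub_realPart_of_spectrum_eq_sphere _ spectrum_shiftUnitary

theorem line_graph_laplacian_spectrum :
    ∃! T : lp (fun _ : ℤ => ℂ) 2 →L[ℂ] lp (fun _ : ℤ => ℂ) 2,
      (∀ f : lp (fun _ : ℤ => ℂ) 2, ∀ k : ℤ,
        (T f : ∀ _ : ℤ, ℂ) k = (f : ∀ _ : ℤ, ℂ) k -
          ((f : ∀ _ : ℤ, ℂ) (k - 1) + (f : ∀ _ : ℤ, ℂ) (k + 1)) / 2) ∧
      spectrum ℂ T = {z : ℂ | z.im = 0 ∧ 0 ≤ z.re ∧ z.re ≤ 2} := by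
  refine ⟨lineLaplacian, ⟨lineLaplacian_apply, spectrum_lineLaplacian⟩, ?_⟩
  rintro T ⟨hT, -⟩
  ext f k
  rw [hT, lineLaplacian_apply]
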